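/- Let A and B be m × m real positive definite matrices, and suppose A is diagonal with diagonal entries a₁, …, a_m. Denote the diagonal entries of B by b₁, …, b_m (B is not necessarily diagonal). Then tr(B A^{−1}) − ln det(B A^{−1}) ≥ Σ_{i=1}^m b_i/a_i − Σ_{i=1}^m ln( b_i/a_i ). -/

import Mathlib

open Matrix Real

/-!
With `A` diagonal, `tr(B A⁻¹) = ∑ bᵢ/aᵢ` and `log det(B A⁻¹) = log det B - ∑ log aᵢ`,
so the claim is Hadamard's inequality `det B ≤ ∏ bᵢ`. To prove it, rescale `B` to `C = D B D` with
`D = diag(bᵢ^{-1/2})`, so that `C` has unit diagonal; for the eigenvalues `λⱼ > 0` of `C`,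
`log det C = ∑ log λⱼ ≤ ∑ (λⱼ - 1) = tr C - m = 0`.
-/

namespace Matrix

variable {n : Type*} [Fintype n] [DecidableEq n]

theorem inv_diagonal_of_ne_zero {K : Type*} [Field K] {v : n → K} (hv : ∀ i, v i ≠ 0) :
    (diagonal v)⁻¹ = diagonal v⁻¹ := by
  lift v to (n → K)ˣ using Pi.isUnit_iff.mpr fun i => (hv i).isUnit
  simp [inv_diagonal]

theorem PosDef.log_det_le_trace_sub_card {C : Matrix n n ℝ} (hC : C.PosDef) :
    log C.det ≤ C.trace - Fintype.card n := by
  have hev := hC.eigenvalues_pos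
  rw [hC.1.det_eq_prod_eigenvalues, hC.1.trace_eq_sum_eigenvalues, Fintype.card_eq_sum_ones]
  simp only [RCLike.ofReal_real_eq_id, id, Nat.cast_sum, Nat.cast_one, ← Finset.sum_sub_distrib]
  rw [log_prod fun i _ => (hev i).ne']
  exact Finset.sum_le_sum fun i _ => log_le_sub_one_of_pos (hev i)

theorem PosDef.det_le_prod_diag {B : Matrix n n ℝ} (hB : B.PosDef) : B.det ≤ ∏ i, B i i := by
  set d : n → ℝ := fun i => (√(B i i))⁻¹
  have hd_sq : ∀ i, d i * d i = (B i i)⁻¹ := fun i => by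
    rw [← mul_inv, mul_self_sqrt hB.diag_pos.le]
  have hd_unit : IsUnit d :=
    Pi.isUnit_iff.mpr fun i => (inv_pos.mpr (sqrt_pos.mpr hB.diag_pos)).ne'.isUnit
  set C := diagonal d * B * diagonal d
  have hC : C.PosDef := by
    simpa using hB.conjTranspose_mul_mul_same
      (mulVec_injective_of_isUnit (isUnit_diagonal.mpr hd_unit))
  have hC_diag : ∀ i, C i i = 1 := fun i => by
    simp only [C, mul_diagonal, diagonal_mul]
    rw [mul_right_comm, hd_sq, inv_mul_cancel₀ hB.diag_pos.ne']
  have hC_det_le : C.det ≤ 1 := by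
    have := hC.log_det_le_trace_sub_card
    rw [show C.trace = Fintype.card n by simp [trace, hC_diag], sub_self] at this
    exact (log_nonpos_iff hC.det_pos.le).mp this
  have hC_det : C.det = B.det * (∏ i, B i i)⁻¹ := by
    simp only [C, det_mul, det_diagonal]
    rw [← Finset.prod_inv_distrib, ← Finset.prod_congr rfl fun i _ => hd_sq i,
      Finset.prod_mul_distrib]
    ring
  rwa [hC_det, mul_inv_le_iff₀ (Finset.prod_pos fun i _ => hB.diag_pos), one_mul] at hC_det_le

theorem PosDef.log_det_le_sum_log_diag {B : Matrix n n ℝ} (hB : B.PosDef) :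
    log B.det ≤ ∑ i, log (B i i) := by
  rw [← log_prod fun i _ => hB.diag_pos.ne']
  exact log_le_log hB.det_pos hB.det_le_prod_diag

end Matrix

/-- Let `A = diagonal a` and `B` be `m × m` real positive definite matrices, with `A`
diagonal (diagonal entries `a i`) and `B` not necessarily diagonal (diagonal entries
`B i i`).  Then `tr(B A⁻¹) − ln det(B A⁻¹) ≥ ∑ i, (B i i)/(a i) − ∑ i, ln((B i i)/(a i))`. -/
theorem stmt9 (m : ℕ) (a : Fin m → ℝ) (B : Matrix (Fin m) (Fin m) ℝ)
    (hA : (Matrix.diagonal a).PosDef) (hB : B.PosDef) :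
    (B * (Matrix.diagonal a)⁻¹).trace - Real.log (B * (Matrix.diagonal a)⁻¹).det ≥
      (∑ i, B i i / a i) - ∑ i, Real.log (B i i / a i) := by
  have ha : ∀ i, 0 < a i := posDef_diagonal_iff.mp hA
  have ha_inv : ∀ i, 0 < a⁻¹ i := fun i => inv_pos.mpr (ha i)
  rw [inv_diagonal_of_ne_zero fun i => (ha i).ne']
  have htrace : (B * diagonal a⁻¹).trace = ∑ i, B i i / a i := by
    simp [trace, mul_diagonal, div_eq_mul_inv]
  have hlog_det : log (B * diagonal a⁻¹).det = log B.det - ∑ i, log (a i) := by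
    rw [det_mul, det_diagonal, log_mul hB.det_pos.ne' (Finset.prod_pos fun i _ => ha_inv i).ne',
      log_prod fun i _ => (ha_inv i).ne']
    simp [log_inv, sub_eq_add_neg]
  have hlog_sum : ∑ i, log (B i i / a i) = ∑ i, log (B i i) - ∑ i, log (a i) := by
    rw [← Finset.sum_sub_distrib]
    exact Finset.sum_congr rfl fun i _ => log_div hB.diag_pos.ne' (ha i).ne'
  rw [ge_iff_le, htrace, hlog_det, hlog_sum]
  linarith [hB.log_det_le_sum_log_diag]
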